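/- arXiv:2501.09150 — 12 statements merged into one kernel-verified Lean document; each statement's English description precedes it below -/
import Mathlib

section
/- Every point (x, X) in QPB₃ satisfies the ETRI1 inequality 2·x1 + X11 − 2·X12 − 2·X13 + X23 ≥ 0, where x = (x1,x2,x3) and Xij denotes the (i,j) entry of the symmetric matrix X. -/
/-- The unit box in ℝ³. -/
def Box3 : Set (Fin 3 → ℝ) := {x | ∀ i, 0 ≤ x i ∧ x i ≤ 1}

/-- `QPB₃`: the convex hull of the rank-one lifted points of the unit box, in the space of
pairs `(x, X)` where `X` is a `3 × 3` real matrix. -/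
noncomputable def QPB3 : Set ((Fin 3 → ℝ) × Matrix (Fin 3) (Fin 3) ℝ) :=
  convexHull ℝ {p | ∃ x ∈ Box3, p = (x, Matrix.of fun i j => x i * x j)}

lemma etri1_lin : IsLinearMap ℝ (fun p : (Fin 3 → ℝ) × Matrix (Fin 3) (Fin 3) ℝ =>
    2 * p.1 0 + p.2 0 0 - 2 * p.2 0 1 - 2 * p.2 0 2 + p.2 1 2) := by
  constructor
  · intro p q
    simp [Matrix.add_apply]
    ring
  · intro c p
    simp [Matrix.smul_apply, smul_eq_mul]
    ring

/-- Every point of `QPB₃` satisfies the ETRI1 inequality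
`2·x1 + X11 − 2·X12 − 2·X13 + X23 ≥ 0`. -/
theorem etri1_valid_on_QPB3 (p : (Fin 3 → ℝ) × Matrix (Fin 3) (Fin 3) ℝ) (hp : p ∈ QPB3) :
    2 * p.1 0 + p.2 0 0 - 2 * p.2 0 1 - 2 * p.2 0 2 + p.2 1 2 ≥ 0 := by
  have h := convexHull_min (s := {p : (Fin 3 → ℝ) × Matrix (Fin 3) (Fin 3) ℝ |
      ∃ x ∈ Box3, p = (x, Matrix.of fun i j => x i * x j)})
    (t := {p : (Fin 3 → ℝ) × Matrix (Fin 3) (Fin 3) ℝ |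
      2 * p.1 0 + p.2 0 0 - 2 * p.2 0 1 - 2 * p.2 0 2 + p.2 1 2 ≥ 0})
    (fun q hq => by
      obtain ⟨x, hx, rfl⟩ := hq
      obtain ⟨h0l, h0u⟩ := hx 0
      obtain ⟨h1l, h1u⟩ := hx 1
      obtain ⟨h2l, h2u⟩ := hx 2
      simp only [Set.mem_setOf_eq, Matrix.of_apply]
      nlinarith [mul_nonneg h0l (sub_nonneg.2 h1u), mul_nonneg h0l (sub_nonneg.2 h2u),
        mul_nonneg h1l h2l, mul_nonneg (mul_nonneg h1l h2l) h0l, sq_nonneg (x 0 - x 1),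
        sq_nonneg (x 0 - x 2), mul_nonneg (sub_nonneg.2 h1u) (sub_nonneg.2 h2u)])
    (convex_halfSpace_ge etri1_lin 0)
  exact h hp
end

section
/- For every x = (x1, x2, x3) with 0 ≤ xi ≤ 1 for i = 1,2,3, the inequality 4·x1 + 4·x1² − 4·x1·x2 − 4·x1·x3 + x2·x3 ≥ 0 holds. (This is the pointwise form of the first ETRI2 inequality 4x1 + 4X11 − 4X12 − 4X13 + X23 ≥ 0 evaluated at X = x xᵀ.) -/
/-- Pointwise form of the first ETRI2 inequality on the unit box. -/
theorem etri2_pointwise (x1 x2 x3 : ℝ)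
    (h1 : 0 ≤ x1) (h1' : x1 ≤ 1) (h2 : 0 ≤ x2) (h2' : x2 ≤ 1)
    (h3 : 0 ≤ x3) (h3' : x3 ≤ 1) :
    4 * x1 + 4 * x1 ^ 2 - 4 * x1 * x2 - 4 * x1 * x3 + x2 * x3 ≥ 0 := by
  nlinarith [mul_nonneg h2 h3, mul_nonneg h1 (sub_nonneg.2 h2'), mul_nonneg h1 (sub_nonneg.2 h3'), sq_nonneg (2*x1 - x2), sq_nonneg (2*x1 - x3), sq_nonneg (2*x1 - x2 - x3), mul_nonneg (sub_nonneg.2 h2') (sub_nonneg.2 h3')]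
end

section
/- Every point (x, X) in QPB₃ satisfies the ETRI2 inequality 4·x1 + 4·X11 − 4·X12 − 4·X13 + X23 ≥ 0, where x = (x1,x2,x3) and Xij denotes the (i,j) entry of the symmetric matrix X. -/
/-- Every point of `QPB₃` satisfies the ETRI2 inequality
`4·x1 + 4·X11 − 4·X12 − 4·X13 + X23 ≥ 0`. -/
theorem etri2_valid_on_QPB3 (p : (Fin 3 → ℝ) × Matrix (Fin 3) (Fin 3) ℝ) (hp : p ∈ QPB3) :
    4 * p.1 0 + 4 * p.2 0 0 - 4 * p.2 0 1 - 4 * p.2 0 2 + p.2 1 2 ≥ 0 := by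
  set S : Set ((Fin 3 → ℝ) × Matrix (Fin 3) (Fin 3) ℝ) :=
    {q | 4 * q.1 0 + 4 * q.2 0 0 - 4 * q.2 0 1 - 4 * q.2 0 2 + q.2 1 2 ≥ 0} with hS
  have hconv : Convex ℝ S := by
    intro a ha b hb s t hs ht hst
    simp only [hS, Set.mem_setOf_eq] at *
    simp only [Prod.fst_add, Prod.snd_add, Prod.smul_fst, Prod.smul_snd,
      Pi.add_apply, Pi.smul_apply, Matrix.add_apply, Matrix.smul_apply, smul_eq_mul]
    nlinarith [mul_le_mul_of_nonneg_left ha hs, mul_le_mul_of_nonneg_left hb ht]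
  have hsub : QPB3 ⊆ S := by
    apply convexHull_min _ hconv
    rintro q ⟨x, hx, rfl⟩
    have h0 := hx 0; have h1 := hx 1; have h2 := hx 2
    simp only [hS, Set.mem_setOf_eq, Matrix.of_apply]
    nlinarith [sq_nonneg (2 * x 0 - x 1), sq_nonneg (2 * x 0 - x 2),
      sq_nonneg (2 * x 0 + 1 - x 1 - x 2), mul_nonneg h1.1 h2.1,
      mul_nonneg (sub_nonneg.2 h1.2) (sub_nonneg.2 h2.2)]
  exact hsub hp
end

section
/- For every x = (x1, x2, x3) with 0 ≤ xi ≤ 1 for i = 1,2,3, the inequality 4·x1 + 4·x1² − 8·x1·x2 − 4·x1·x3 + x2² + 3·x2·x3 ≥ 0 holds. (This is the pointwise form of the first ETRI3 inequality 4x1 + 4X11 − 8X12 − 4X13 + X22 + 3X23 ≥ 0 evaluated at X = x xᵀ.) -/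
/-- Pointwise form of the first ETRI3 inequality on the unit box. -/
theorem etri3_pointwise (x1 x2 x3 : ℝ)
    (h1 : 0 ≤ x1) (h1' : x1 ≤ 1) (h2 : 0 ≤ x2) (h2' : x2 ≤ 1)
    (h3 : 0 ≤ x3) (h3' : x3 ≤ 1) :
    4 * x1 + 4 * x1 ^ 2 - 8 * x1 * x2 - 4 * x1 * x3 + x2 ^ 2 + 3 * x2 * x3 ≥ 0 := by
  nlinarith [sq_nonneg (2*x1 - x2), sq_nonneg (2*x1 - x2 - x3), mul_nonneg h2 h3, mul_nonneg (mul_nonneg h2 h3) (sub_nonneg.2 h1'), mul_nonneg (sub_nonneg.2 h2') h3, mul_nonneg h1 (sub_nonneg.2 h3'), mul_nonneg (mul_nonneg h1 (sub_nonneg.2 h2')) h3, mul_nonneg h1 (sub_nonneg.2 h2'), sq_nonneg x2, sq_nonneg x1]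
end

section
/- Every point (x, X) in QPB₃ satisfies the ETRI3 inequality 4·x1 + 4·X11 − 8·X12 − 4·X13 + X22 + 3·X23 ≥ 0, where x = (x1,x2,x3) and Xij denotes the (i,j) entry of the symmetric matrix X. -/
/-- Every point of `QPB₃` satisfies the ETRI3 inequality
`4·x1 + 4·X11 − 8·X12 − 4·X13 + X22 + 3·X23 ≥ 0`. -/
theorem etri3_valid_on_QPB3 (p : (Fin 3 → ℝ) × Matrix (Fin 3) (Fin 3) ℝ) (hp : p ∈ QPB3) :
    4 * p.1 0 + 4 * p.2 0 0 - 8 * p.2 0 1 - 4 * p.2 0 2 + p.2 1 1 + 3 * p.2 1 2 ≥ 0 := by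
  have key : QPB3 ⊆ {p : (Fin 3 → ℝ) × Matrix (Fin 3) (Fin 3) ℝ |
      4 * p.1 0 + 4 * p.2 0 0 - 8 * p.2 0 1 - 4 * p.2 0 2 + p.2 1 1 + 3 * p.2 1 2 ≥ 0} := by
    apply convexHull_min
    · rintro q ⟨x, hx, rfl⟩
      have h0 := hx 0
      have h1 := hx 1
      have h2 := hx 2
      simp only [Set.mem_setOf_eq, Matrix.of_apply]
      nlinarith [mul_nonneg (sub_nonneg.2 h2.2) (sq_nonneg (2 * x 0 - x 1)),
        mul_nonneg (sub_nonneg.2 h2.2) (mul_nonneg h0.1 (sub_nonneg.2 h1.2)),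
        mul_nonneg h2.1 (sq_nonneg (2 * x 0 - 2 * x 1)),
        mul_nonneg h2.1 (mul_nonneg h1.1 (sub_nonneg.2 h1.2))]
    · intro q hq r hr a b ha hb hab
      simp only [Set.mem_setOf_eq] at hq hr ⊢
      simp only [Prod.smul_fst, Prod.smul_snd, Prod.fst_add, Prod.snd_add,
        Pi.add_apply, Pi.smul_apply, Matrix.add_apply, Matrix.smul_apply,
        smul_eq_mul]
      nlinarith [mul_le_mul_of_nonneg_left hq ha, mul_le_mul_of_nonneg_left hr hb]
  have := key hp
  exact this
end

section
/- (Lemma 2.1) The set of vectors (x1, x2, x3, X11, X22, X33, X12, X13, X23) ∈ ℝ⁹ such that (x, X) ∈ QPB₃ and 2·x1 + X11 − 2·X12 − 2·X13 + X23 = 0 has affine dimension exactly 5; that is, the direction of the affine span of this set is a linear subspace of ℝ⁹ of dimension 5. -/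
/-- The points of `QPB₃`, viewed as vectors
`(x1, x2, x3, X11, X22, X33, X12, X13, X23) ∈ ℝ⁹`, on which the constraint
`2·x1 + X11 − 2·X12 − 2·X13 + X23 ≥ 0` is tight. -/
noncomputable def tightFace : Set (Fin 9 → ℝ) :=
  {v | ∃ p ∈ QPB3,
    v = ![p.1 0, p.1 1, p.1 2, p.2 0 0, p.2 1 1, p.2 2 2, p.2 0 1, p.2 0 2, p.2 1 2] ∧
    2 * p.1 0 + p.2 0 0 - 2 * p.2 0 1 - 2 * p.2 0 2 + p.2 1 2 = 0}


/-! On a lifted box point `(x, x xᵀ)` the constraint becomes the quadratic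
`2a + a² − 2ab − 2ac + bc` in `(a, b, c) = x`, which is nonnegative on the box and vanishes only
at `(0, t, 0)`, `(0, 0, t)` and `(1, 1, 1)`. Since the constraint is linear and nonnegative on the
generators of `QPB₃`, the face is the convex hull of the lifts of these zeros, all of which satisfy
`X11 = X12 = X13 = X23 = x1`. Hence the face lies in a 5-dimensional subspace of `ℝ⁹`
(coordinates `x1, x2, x3, X22, X33`), and the lifts of `(0, t, 0)`, `(0, 0, t)` and `(1, 1, 1)`
span it. -/

open Set Submodule

section Face

variable {𝕜 E : Type*} [Field 𝕜] [LinearOrder 𝕜] [IsStrictOrderedRing 𝕜]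
  [AddCommGroup E] [Module 𝕜 E]

theorem mem_convexHull_inter_of_nonneg {s : Set E} {ℓ : E →ₗ[𝕜] 𝕜} (hs : ∀ x ∈ s, 0 ≤ ℓ x)
    {p : E} (hp : p ∈ convexHull 𝕜 s) (hp0 : ℓ p = 0) :
    p ∈ convexHull 𝕜 (s ∩ {x | ℓ x = 0}) := by
  let t : Set E := {x | 0 ≤ ℓ x ∧ (ℓ x = 0 → x ∈ convexHull 𝕜 (s ∩ {x | ℓ x = 0}))}
  have hst : s ⊆ t := fun x hx => ⟨hs x hx, fun hx0 => subset_convexHull 𝕜 _ ⟨hx, hx0⟩⟩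
  have ht : Convex 𝕜 t := by
    refine convex_iff_forall_pos.2 fun x ⟨hx, hxt⟩ y ⟨hy, hyt⟩ a b ha hb hab => ⟨?_, fun h => ?_⟩
    · simp only [map_add, map_smul, smul_eq_mul]
      positivity
    · simp only [map_add, map_smul, smul_eq_mul] at h
      have hx0 : ℓ x = 0 := by nlinarith [mul_nonneg ha.le hx, mul_nonneg hb.le hy]
      have hy0 : ℓ y = 0 := by nlinarith [mul_nonneg ha.le hx, mul_nonneg hb.le hy]
      exact convex_convexHull 𝕜 _ (hxt hx0) (hyt hy0) ha.le hb.le hab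
  exact (convexHull_min hst ht hp).2 hp0

end Face

theorem vectorSpan_eq_span_of_zero_mem {k V : Type*} [Ring k] [AddCommGroup V] [Module k V]
    {s : Set V} (hs : (0 : V) ∈ s) : vectorSpan k s = span k s := by
  simp [vectorSpan_eq_span_vsub_set_right k hs]

theorem tightQuadratic_nonneg {a b c : ℝ} (ha : 0 ≤ a) (hb : 0 ≤ b) (hb1 : b ≤ 1) (hc : 0 ≤ c)
    (hc1 : c ≤ 1) : 0 ≤ 2 * a + a * a - 2 * (a * b) - 2 * (a * c) + b * c := by
  nlinarith [mul_nonneg ha (sub_nonneg.2 hb1), mul_nonneg ha (sub_nonneg.2 hc1),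
    mul_nonneg hb hc, sq_nonneg (a - b), sq_nonneg (a - c),
    mul_nonneg (sub_nonneg.2 hb1) (sub_nonneg.2 hc1)]

theorem eq_of_tightQuadratic_eq_zero {a b c : ℝ} (ha : 0 ≤ a) (ha1 : a ≤ 1) (hb : 0 ≤ b)
    (hb1 : b ≤ 1) (hc : 0 ≤ c) (hc1 : c ≤ 1)
    (h : 2 * a + a * a - 2 * (a * b) - 2 * (a * c) + b * c = 0) :
    a * a = a ∧ a * b = a ∧ a * c = a ∧ b * c = a := by
  have ha01 : a * (a - 1) = 0 := by
    nlinarith [mul_nonneg ha (sub_nonneg.2 hb1), mul_nonneg ha (sub_nonneg.2 hc1),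
      mul_nonneg (mul_nonneg hb hc) (sub_nonneg.2 ha1),
      mul_nonneg (mul_nonneg ha (sub_nonneg.2 hb1)) (sub_nonneg.2 hc1),
      mul_nonneg ha (sub_nonneg.2 ha1)]
  rcases mul_eq_zero.1 ha01 with rfl | ha'
  · have hbc : b * c = 0 := by linarith
    simp [hbc]
  · obtain rfl : a = 1 := by linarith
    have hb' : b = 1 := by nlinarith [mul_nonneg (sub_nonneg.2 hb1) (sub_nonneg.2 hc1)]
    have hc' : c = 1 := by nlinarith [mul_nonneg (sub_nonneg.2 hb1) (sub_nonneg.2 hc1)]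
    simp [hb', hc']

noncomputable def tightFunctional : ((Fin 3 → ℝ) × Matrix (Fin 3) (Fin 3) ℝ) →ₗ[ℝ] ℝ where
  toFun p := 2 * p.1 0 + p.2 0 0 - 2 * p.2 0 1 - 2 * p.2 0 2 + p.2 1 2
  map_add' p q := by simp only [Prod.fst_add, Prod.snd_add, Pi.add_apply, Matrix.add_apply]; ring
  map_smul' r p := by
    simp only [Prod.smul_fst, Prod.smul_snd, Pi.smul_apply, Matrix.smul_apply, smul_eq_mul,
      RingHom.id_apply]
    ring

def boxLifts : Set ((Fin 3 → ℝ) × Matrix (Fin 3) (Fin 3) ℝ) :=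
  {p | ∃ x ∈ Box3, p = (x, Matrix.of fun i j => x i * x j)}

theorem tightFunctional_nonneg_of_mem_boxLifts {p} (hp : p ∈ boxLifts) : 0 ≤ tightFunctional p := by
  obtain ⟨x, hx, rfl⟩ := hp
  exact tightQuadratic_nonneg (hx 0).1 (hx 1).1 (hx 1).2 (hx 2).1 (hx 2).2

theorem eq_x1_of_mem_QPB3_of_tightFunctional_eq_zero
    {p : (Fin 3 → ℝ) × Matrix (Fin 3) (Fin 3) ℝ} (hp : p ∈ QPB3) (hp0 : tightFunctional p = 0) :
    p.2 0 0 = p.1 0 ∧ p.2 0 1 = p.1 0 ∧ p.2 0 2 = p.1 0 ∧ p.2 1 2 = p.1 0 := by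
  let D : Set ((Fin 3 → ℝ) × Matrix (Fin 3) (Fin 3) ℝ) :=
    {p | p.2 0 0 = p.1 0 ∧ p.2 0 1 = p.1 0 ∧ p.2 0 2 = p.1 0 ∧ p.2 1 2 = p.1 0}
  have hD : Convex ℝ D := by
    rintro q ⟨h1, h2, h3, h4⟩ r ⟨k1, k2, k3, k4⟩ a b - - -
    simp [D, h1, h2, h3, h4, k1, k2, k3, k4]
  have hlifts : boxLifts ∩ {q | tightFunctional q = 0} ⊆ D := by
    rintro _ ⟨⟨x, hx, rfl⟩, h0⟩
    exact eq_of_tightQuadratic_eq_zero (hx 0).1 (hx 0).2 (hx 1).1 (hx 1).2 (hx 2).1 (hx 2).2 h0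
  exact convexHull_min hlifts hD
    (mem_convexHull_inter_of_nonneg (fun _ => tightFunctional_nonneg_of_mem_boxLifts) hp hp0)

def faceDirection : Fin 5 → Fin 9 → ℝ :=
  ![![1, 0, 0, 1, 0, 0, 1, 1, 1], ![0, 1, 0, 0, 0, 0, 0, 0, 0], ![0, 0, 1, 0, 0, 0, 0, 0, 0],
    ![0, 0, 0, 0, 1, 0, 0, 0, 0], ![0, 0, 0, 0, 0, 1, 0, 0, 0]]

theorem linearIndependent_faceDirection : LinearIndependent ℝ faceDirection := by
  refine Fintype.linearIndependent_iff.2 fun g hg i => ?_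
  fin_cases i
  · simpa [Fin.sum_univ_five, faceDirection] using congrFun hg 0
  · simpa [Fin.sum_univ_five, faceDirection] using congrFun hg 1
  · simpa [Fin.sum_univ_five, faceDirection] using congrFun hg 2
  · simpa [Fin.sum_univ_five, faceDirection] using congrFun hg 4
  · simpa [Fin.sum_univ_five, faceDirection] using congrFun hg 5

theorem tightFace_subset_span : tightFace ⊆ span ℝ (range faceDirection) := by
  rintro _ ⟨p, hp, rfl, hp0⟩
  obtain ⟨h00, h01, h02, h12⟩ := eq_x1_of_mem_QPB3_of_tightFunctional_eq_zero hp hp0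
  have hv : ![p.1 0, p.1 1, p.1 2, p.2 0 0, p.2 1 1, p.2 2 2, p.2 0 1, p.2 0 2, p.2 1 2] =
      ∑ i, ![p.1 0, p.1 1, p.1 2, p.2 1 1, p.2 2 2] i • faceDirection i := by
    ext j
    fin_cases j <;> simp [Fin.sum_univ_five, faceDirection, h00, h01, h02, h12]
  rw [hv]
  exact sum_mem fun i _ => smul_mem _ _ (subset_span ⟨i, rfl⟩)

def liftVec (a b c : ℝ) : Fin 9 → ℝ := ![a, b, c, a * a, b * b, c * c, a * b, a * c, b * c]

theorem liftVec_mem_tightFace {a b c : ℝ} (ha : a ∈ Icc 0 1) (hb : b ∈ Icc 0 1) (hc : c ∈ Icc 0 1)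
    (h : 2 * a + a * a - 2 * (a * b) - 2 * (a * c) + b * c = 0) : liftVec a b c ∈ tightFace :=
  ⟨(![a, b, c], Matrix.of fun i j => ![a, b, c] i * ![a, b, c] j),
    subset_convexHull ℝ _ ⟨_, fun j => by fin_cases j <;> assumption, rfl⟩, rfl, h⟩

theorem zero_mem_tightFace : (0 : Fin 9 → ℝ) ∈ tightFace := by
  convert liftVec_mem_tightFace (a := 0) (b := 0) (c := 0) (by simp) (by simp) (by simp) (by simp)
  ext j; fin_cases j <;> simp [liftVec]

theorem faceDirection_mem_span_tightFace (i : Fin 5) :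
    faceDirection i ∈ span ℝ tightFace := by
  have hmem (a b c : ℝ) (ha : a ∈ Icc 0 1) (hb : b ∈ Icc 0 1) (hc : c ∈ Icc 0 1)
      (h : 2 * a + a * a - 2 * (a * b) - 2 * (a * c) + b * c = 0) :
      liftVec a b c ∈ span ℝ tightFace :=
    subset_span (liftVec_mem_tightFace ha hb hc h)
  have hb1 := hmem 0 1 0 (by norm_num) (by norm_num) (by norm_num) (by norm_num)
  have hb2 := hmem 0 (1 / 2) 0 (by norm_num) (by norm_num) (by norm_num) (by norm_num)
  have hc1 := hmem 0 0 1 (by norm_num) (by norm_num) (by norm_num) (by norm_num)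
  have hc2 := hmem 0 0 (1 / 2) (by norm_num) (by norm_num) (by norm_num) (by norm_num)
  have hone := hmem 1 1 1 (by norm_num) (by norm_num) (by norm_num) (by norm_num)
  -- `liftVec 0 t 0 = t • faceDirection 1 + t ^ 2 • faceDirection 3`: `t = 1, 1/2` separate the two.
  have hcomb : faceDirection =
      ![liftVec 1 1 1 - liftVec 0 1 0 - liftVec 0 0 1,
        (4 : ℝ) • liftVec 0 (1 / 2) 0 - liftVec 0 1 0,
        (4 : ℝ) • liftVec 0 0 (1 / 2) - liftVec 0 0 1,
        (2 : ℝ) • liftVec 0 1 0 - (4 : ℝ) • liftVec 0 (1 / 2) 0,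
        (2 : ℝ) • liftVec 0 0 1 - (4 : ℝ) • liftVec 0 0 (1 / 2)] := by
    ext i j
    fin_cases i <;> fin_cases j <;> norm_num [faceDirection, liftVec]
  rw [hcomb]
  fin_cases i
  exacts [sub_mem (sub_mem hone hb1) hc1, sub_mem (smul_mem _ _ hb2) hb1,
    sub_mem (smul_mem _ _ hc2) hc1, sub_mem (smul_mem _ _ hb1) (smul_mem _ _ hb2),
    sub_mem (smul_mem _ _ hc1) (smul_mem _ _ hc2)]

/-- The face of `QPB₃` on which the constraint is tight has affine dimension exactly 5. -/
theorem tightFace_dim :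
    Module.finrank ℝ (affineSpan ℝ tightFace).direction = 5 := by
  have hspan : span ℝ tightFace = span ℝ (range faceDirection) :=
    le_antisymm (span_le.2 tightFace_subset_span)
      (span_le.2 (range_subset_iff.2 faceDirection_mem_span_tightFace))
  rw [direction_affineSpan, vectorSpan_eq_span_of_zero_mem zero_mem_tightFace, hspan,
    finrank_span_eq_card linearIndependent_faceDirection, Fintype.card_fin]
end

section
/- (Key step in proof of Lemma 2.1) Let x = (x1, x2, x3) with 0 ≤ xi ≤ 1 for i = 1,2,3, and suppose x1² − 2·x1·(x2 + x3 − 1) + x2·x3 = 0 (equivalently, 2x1 + x1² − 2x1x2 − 2x1x3 + x2x3 = 0). Then either x1 = 0 and (x2 = 0 or x3 = 0), or x = (1, 1, 1). -/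
/-- Key step in the proof of Lemma 2.1: characterization of the rank-one points on which the
first ETRI1 inequality is tight. -/
theorem etri1_tight_points (x1 x2 x3 : ℝ)
    (h1 : 0 ≤ x1) (h1' : x1 ≤ 1) (h2 : 0 ≤ x2) (h2' : x2 ≤ 1)
    (h3 : 0 ≤ x3) (h3' : x3 ≤ 1)
    (heq : x1 ^ 2 - 2 * x1 * (x2 + x3 - 1) + x2 * x3 = 0) :
    (x1 = 0 ∧ (x2 = 0 ∨ x3 = 0)) ∨ (x1 = 1 ∧ x2 = 1 ∧ x3 = 1) := by
  rcases eq_or_lt_of_le h1 with h0 | h0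
  · left
    refine ⟨h0.symm, ?_⟩
    have : x2 * x3 = 0 := by nlinarith
    exact mul_eq_zero.mp this
  · right
    have e1 : x1 = 1 := by
      rcases eq_or_lt_of_le h1' with h1e | h1e
      · exact h1e
      · exfalso
        have ht1 : x2 * x3 ≤ 1 := mul_le_one₀ h2' h3 h3'
        have ht0 : 0 ≤ x2 * x3 := mul_nonneg h2 h3
        have hA : 0 ≤ x1 * (1 - x2) * (1 - x3) :=
          mul_nonneg (mul_nonneg h1 (by linarith)) (by linarith)
        have hB : 0 ≤ (1 - x2 * x3) * x1 ^ 2 * (1 - (1 - x1) ^ 2) := by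
          apply mul_nonneg (mul_nonneg (by linarith) (sq_nonneg x1))
          nlinarith
        have hC : 0 ≤ (x2 * x3) * (1 - x1) ^ 2 * (1 - x1 ^ 2) := by
          apply mul_nonneg (mul_nonneg ht0 (sq_nonneg _))
          nlinarith
        have hD : 0 < x1 ^ 2 * (1 - x1) ^ 2 :=
          mul_pos (pow_pos h0 2) (pow_pos (by linarith) 2)
        nlinarith [hA, hB, hC, hD]
    subst e1
    have hp : 0 ≤ 1 - x2 - x3 + x2 * x3 := by
      nlinarith [mul_nonneg (sub_nonneg.mpr h2') (sub_nonneg.mpr h3')]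
    have h23 : 2 ≤ x2 + x3 := by nlinarith
    exact ⟨rfl, by linarith, by linarith⟩
end

section
/- (Key step in proof of Lemma 3.1) Let x = (x1, x2, x3) with 0 ≤ xi ≤ 1 for i = 1,2,3, and suppose 4·x1 + 4·x1² − 4·x1·x2 − 4·x1·x3 + x2·x3 = 0. Then either x1 = 0 and (x2 = 0 or x3 = 0), or x = (1/2, 1, 1). -/
/-- Key step in the proof of Lemma 3.1: characterization of the rank-one points on which the
first ETRI2 inequality is tight. -/
theorem etri2_tight_points (x1 x2 x3 : ℝ)
    (h1 : 0 ≤ x1) (h1' : x1 ≤ 1) (h2 : 0 ≤ x2) (h2' : x2 ≤ 1)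
    (h3 : 0 ≤ x3) (h3' : x3 ≤ 1)
    (heq : 4 * x1 + 4 * x1 ^ 2 - 4 * x1 * x2 - 4 * x1 * x3 + x2 * x3 = 0) :
    (x1 = 0 ∧ (x2 = 0 ∨ x3 = 0)) ∨ (x1 = 1 / 2 ∧ x2 = 1 ∧ x3 = 1) := by
  by_cases hx : x1 = 0
  · left
    refine ⟨hx, mul_eq_zero.mp ?_⟩
    nlinarith
  · right
    have hx1 : 0 < x1 := lt_of_le_of_ne h1 (Ne.symm hx)
    have hq : 1/4 ≤ x1 := by
      by_contra hlt
      push_neg at hlt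
      rcases le_or_gt x3 (4 * x1) with hc | hc
      · nlinarith [mul_nonneg (sub_nonneg.mpr h2') (sub_nonneg.mpr (le_of_lt hlt))]
      · nlinarith [mul_nonneg h2 (sub_nonneg.mpr (le_of_lt hc))]
    have key : (2*x1-1)^2 + (4*x1-1)*((1-x2)+(1-x3)) + (1-x2)*(1-x3) = 0 := by
      nlinarith [heq]
    have ha : 0 ≤ (2*x1-1)^2 := sq_nonneg _
    have hb : 0 ≤ (4*x1-1)*((1-x2)+(1-x3)) := by
      apply mul_nonneg <;> nlinarith
    have hc : 0 ≤ (1-x2)*(1-x3) := by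
      apply mul_nonneg <;> linarith
    have hsq : (2*x1-1)^2 = 0 := by linarith
    have hx12 : x1 = 1/2 := by
      have := pow_eq_zero_iff (n := 2) (by norm_num) |>.mp hsq
      linarith
    subst hx12
    refine ⟨rfl, ?_, ?_⟩ <;> nlinarith
end

section
/- (Key step in proof of Lemma 3.2) Let x = (x1, x2, x3) with 0 ≤ xi ≤ 1 for i = 1,2,3, and suppose 4·x1 + 4·x1² − 8·x1·x2 − 4·x1·x3 + x2² + 3·x2·x3 = 0. Then exactly one of the following holds: x1 = 0 and x2 = 0 (with x3 ∈ [0,1] arbitrary), or x = (1/2, 1, 0), or x = (1, 1, 1). -/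
/-- Key step in the proof of Lemma 3.2: exactly one of three cases holds for rank-one points
on which the first ETRI3 inequality is tight. -/
theorem etri3_tight_points (x1 x2 x3 : ℝ)
    (h1 : 0 ≤ x1) (h1' : x1 ≤ 1) (h2 : 0 ≤ x2) (h2' : x2 ≤ 1)
    (h3 : 0 ≤ x3) (h3' : x3 ≤ 1)
    (heq : 4 * x1 + 4 * x1 ^ 2 - 8 * x1 * x2 - 4 * x1 * x3 + x2 ^ 2 + 3 * x2 * x3 = 0) :
    ((x1 = 0 ∧ x2 = 0) ∧ ¬(x1 = 1 / 2 ∧ x2 = 1 ∧ x3 = 0) ∧ ¬(x1 = 1 ∧ x2 = 1 ∧ x3 = 1)) ∨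
    (¬(x1 = 0 ∧ x2 = 0) ∧ (x1 = 1 / 2 ∧ x2 = 1 ∧ x3 = 0) ∧ ¬(x1 = 1 ∧ x2 = 1 ∧ x3 = 1)) ∨
    (¬(x1 = 0 ∧ x2 = 0) ∧ ¬(x1 = 1 / 2 ∧ x2 = 1 ∧ x3 = 0) ∧ (x1 = 1 ∧ x2 = 1 ∧ x3 = 1)) := by
  rcases le_or_gt (4 * x1) (3 * x2) with hc | hc
  · -- case 4*x1 ≤ 3*x2 : E = (2x1-x2)^2 + 4x1(1-x2) + x3(3x2-4x1)
    have key : (2 * x1 - x2) ^ 2 + 4 * x1 * (1 - x2) + x3 * (3 * x2 - 4 * x1) = 0 := by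
      linear_combination heq
    have hA : 0 ≤ 4 * x1 * (1 - x2) := mul_nonneg (by linarith) (by linarith)
    have hB : 0 ≤ x3 * (3 * x2 - 4 * x1) := mul_nonneg h3 (by linarith)
    have e1 : (2 * x1 - x2) ^ 2 = 0 := le_antisymm (by linarith [sq_nonneg (2 * x1 - x2)]) (sq_nonneg _)
    have e1' : x2 = 2 * x1 := by nlinarith [sq_nonneg (2 * x1 - x2)]
    have e2 : 4 * x1 * (1 - x2) = 0 := by nlinarith
    have e3 : x3 * (3 * x2 - 4 * x1) = 0 := by nlinarith
    by_cases hx1 : x1 = 0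
    · left
      refine ⟨⟨hx1, by rw [e1', hx1]; ring⟩, ?_, ?_⟩
      · rintro ⟨ha, -⟩; rw [hx1] at ha; norm_num at ha
      · rintro ⟨ha, -⟩; rw [hx1] at ha; norm_num at ha
    · have hx2 : x2 = 1 := by
        rcases mul_eq_zero.mp e2 with h | h
        · exact absurd (by linarith : x1 = 0) hx1
        · linarith
      have hx1v : x1 = 1 / 2 := by rw [hx2] at e1'; linarith
      have hx3 : x3 = 0 := by
        rw [hx2, hx1v] at e3; nlinarith
      right; left
      refine ⟨?_, ⟨hx1v, hx2, hx3⟩, ?_⟩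
      · rintro ⟨ha, -⟩; rw [hx1v] at ha; norm_num at ha
      · rintro ⟨ha, -⟩; rw [hx1v] at ha; norm_num at ha
  · -- case 3*x2 < 4*x1 : E = 4(x1-x2)^2 + 3x2(1-x2) + (1-x3)(4x1-3x2)
    have key : 4 * (x1 - x2) ^ 2 + 3 * x2 * (1 - x2) + (1 - x3) * (4 * x1 - 3 * x2) = 0 := by
      linear_combination heq
    have hA : 0 ≤ 3 * x2 * (1 - x2) := mul_nonneg (by linarith) (by linarith)
    have hB : 0 ≤ (1 - x3) * (4 * x1 - 3 * x2) := mul_nonneg (by linarith) (by linarith)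
    have e1 : x1 = x2 := by nlinarith [sq_nonneg (x1 - x2)]
    have e2 : 3 * x2 * (1 - x2) = 0 := by nlinarith [sq_nonneg (x1 - x2)]
    have hx2 : x2 = 1 := by
      rcases mul_eq_zero.mp e2 with h | h
      · have : x2 = 0 := by linarith
        rw [this, e1, this] at hc; norm_num at hc
      · linarith
    have hx1 : x1 = 1 := by rw [hx2] at e1; exact e1
    have hx3 : x3 = 1 := by
      have e3 : (1 - x3) * (4 * x1 - 3 * x2) = 0 := by nlinarith [sq_nonneg (x1 - x2)]
      rw [hx1, hx2] at e3; nlinarith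
    right; right
    refine ⟨?_, ?_, hx1, hx2, hx3⟩
    · rintro ⟨ha, -⟩; rw [hx1] at ha; norm_num at ha
    · rintro ⟨ha, -⟩; rw [hx1] at ha; norm_num at ha
end

section
/- (Lemma 4.1, as used in its proof) Let x1, X11, X12, X13, X23, z be real numbers with X11 ≥ 0 and X23 ≥ 0 satisfying X12 + X13 − x1 ≤ z and z² ≤ X11·X23. Then both the ETRI1 inequality 2·x1 + X11 − 2·X12 − 2·X13 + X23 ≥ 0 and the ETRI2 inequality 4·x1 + 4·X11 − 4·X12 − 4·X13 + X23 ≥ 0 hold. -/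
/-- Lemma 4.1 (as used in its proof): the SOC constraint `z² ≤ X11·X23` together with the
linear constraint `X12 + X13 − x1 ≤ z` implies the ETRI1 and ETRI2 inequalities. -/
theorem soc_implies_etri1_etri2 (x1 X11 X12 X13 X23 z : ℝ)
    (hX11 : 0 ≤ X11) (hX23 : 0 ≤ X23)
    (hlin : X12 + X13 - x1 ≤ z) (hsoc : z ^ 2 ≤ X11 * X23) :
    2 * x1 + X11 - 2 * X12 - 2 * X13 + X23 ≥ 0 ∧
    4 * x1 + 4 * X11 - 4 * X12 - 4 * X13 + X23 ≥ 0 := by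
  constructor
  · nlinarith [sq_nonneg (X11 + X23 - 2*z), sq_nonneg (X11 - X23), sq_nonneg z]
  · nlinarith [sq_nonneg (4*X11 + X23 - 4*z), sq_nonneg (4*X11 - X23), sq_nonneg z]
end

section
/- (Lemma 4.2, as used in its proof) Let x1, X11, X12, X13, X22, X23, z be real numbers with X11 ≥ 0 and X22 + 3·X23 ≥ 0 satisfying X12 + X13 − x1 ≤ z and (X12 + z)² ≤ X11·(X22 + 3·X23). Then the ETRI3 inequality 4·x1 + 4·X11 − 8·X12 − 4·X13 + X22 + 3·X23 ≥ 0 holds. -/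
/-- Lemma 4.2 (as used in its proof): the SOC constraint `(X12 + z)² ≤ X11·(X22 + 3·X23)`
together with the linear constraint `X12 + X13 − x1 ≤ z` implies the ETRI3 inequality. -/
theorem soc_implies_etri3 (x1 X11 X12 X13 X22 X23 z : ℝ)
    (hX11 : 0 ≤ X11) (hX223 : 0 ≤ X22 + 3 * X23)
    (hlin : X12 + X13 - x1 ≤ z)
    (hsoc : (X12 + z) ^ 2 ≤ X11 * (X22 + 3 * X23)) :
    4 * x1 + 4 * X11 - 8 * X12 - 4 * X13 + X22 + 3 * X23 ≥ 0 := by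
  nlinarith [sq_nonneg (4 * X11 - (X22 + 3 * X23)),
    sq_nonneg (4 * X11 + (X22 + 3 * X23) - 4 * (X12 + z)), sq_nonneg (X12 + z), mul_nonneg hX11 hX223]
end

section
/- For the Burer–Letchford instance with Q = [[−2.25, −3, −3], [−3, 0, −0.5], [−3, −0.5, 1]] and q = (3, 1, 0), the maximum of xᵀQx + qᵀx over the unit box [0,1]³ equals 1; that is, xᵀQx + qᵀx ≤ 1 for all x ∈ [0,1]³, and there exists x ∈ [0,1]³ achieving xᵀQx + qᵀx = 1. -/
/-!
Write `a, b, c` for the coordinates and `s = b + c`. The objective splits as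
`(3a(1 - 2s) - 9a²/4) + (b - bc + c²)`, and `1 - (b - bc + c²) = (1 - b)(1 - c) + c(1 - c) ≥ 0`.
If `s ≥ 1/2` the first part is `≤ 0` because `a ≥ 0`. If `s ≤ 1/2` it is at most `(1 - 2s)²`
(complete the square in `a`), and `(1 - b)(1 - c) + c(1 - c) - (1 - 2s)² = 3b + 4c - 4b² - 7bc - 5c²`,
which is nonnegative since `4b² + 7bc + 5c² ≤ 5s² ≤ 5s/2`.
-/

namespace BurerLetchford

noncomputable def objective (a b c : ℝ) : ℝ :=
  -(9 / 4) * a ^ 2 - 6 * a * b - 6 * a * c - b * c + c ^ 2 + 3 * a + b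

theorem quadratic_eq_objective (x : Fin 3 → ℝ) :
    (∑ i, ∑ j, !![(-2.25 : ℝ), -3, -3; -3, 0, -0.5; -3, -0.5, 1] i j * x i * x j)
      + ∑ i, ![(3 : ℝ), 1, 0] i * x i = objective (x 0) (x 1) (x 2) := by
  simp only [Fin.sum_univ_three, Matrix.of_apply, Matrix.cons_val', Matrix.cons_val_zero,
    Matrix.cons_val_one, Matrix.cons_val_two, Matrix.empty_val', Matrix.cons_val_fin_one,
    Matrix.head_cons, Matrix.tail_cons, Matrix.head_fin_const, objective]
  ring

theorem one_sub_objective (a b c : ℝ) :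
    1 - objective a b c
      = a * (9 / 4 * a + 6 * (b + c) - 3) + ((1 - b) * (1 - c) + c * (1 - c)) := by
  unfold objective
  ring

theorem objective_le_one {a b c : ℝ} (ha : 0 ≤ a) (hb₀ : 0 ≤ b) (hb₁ : b ≤ 1)
    (hc₀ : 0 ≤ c) (hc₁ : c ≤ 1) : objective a b c ≤ 1 := by
  have hbc : 0 ≤ (1 - b) * (1 - c) + c * (1 - c) :=
    add_nonneg (mul_nonneg (sub_nonneg.2 hb₁) (sub_nonneg.2 hc₁))
      (mul_nonneg hc₀ (sub_nonneg.2 hc₁))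
  rw [← sub_nonneg, one_sub_objective]
  rcases le_total (1 / 2) (b + c) with hs | hs
  · have ha' : 0 ≤ a * (9 / 4 * a + 6 * (b + c) - 3) := mul_nonneg ha (by linarith)
    linarith
  · have hsq : a * (9 / 4 * a + 6 * (b + c) - 3) + (1 - 2 * (b + c)) ^ 2
        = (3 / 2 * a - (1 - 2 * (b + c))) ^ 2 := by ring
    have hrest : (1 - 2 * (b + c)) ^ 2 ≤ (1 - b) * (1 - c) + c * (1 - c) := by
      nlinarith [mul_nonneg hb₀ hc₀, mul_nonneg (add_nonneg hb₀ hc₀) (sub_nonneg.2 hs)]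
    nlinarith [sq_nonneg (3 / 2 * a - (1 - 2 * (b + c)))]

theorem objective_zero_one_one : objective 0 1 1 = 1 := by
  norm_num [objective]

end BurerLetchford

open BurerLetchford in
/-- For the Burer–Letchford instance, the maximum of `xᵀQx + qᵀx` over the unit box is 1. -/
theorem burer_letchford_max :
    (∀ x : Fin 3 → ℝ, (∀ i, 0 ≤ x i ∧ x i ≤ 1) →
      (∑ i, ∑ j, !![(-2.25 : ℝ), -3, -3; -3, 0, -0.5; -3, -0.5, 1] i j * x i * x j)
        + ∑ i, ![(3 : ℝ), 1, 0] i * x i ≤ 1) ∧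
    (∃ x : Fin 3 → ℝ, (∀ i, 0 ≤ x i ∧ x i ≤ 1) ∧
      (∑ i, ∑ j, !![(-2.25 : ℝ), -3, -3; -3, 0, -0.5; -3, -0.5, 1] i j * x i * x j)
        + ∑ i, ![(3 : ℝ), 1, 0] i * x i = 1) := by
  refine ⟨fun x hx => ?_, ![0, 1, 1], fun i => ?_, ?_⟩
  · rw [quadratic_eq_objective]
    exact objective_le_one (hx 0).1 (hx 1).1 (hx 1).2 (hx 2).1 (hx 2).2
  · fin_cases i <;> norm_num
  · rw [quadratic_eq_objective]
    exact objective_zero_one_one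
end
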